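/- arXiv:1601.01211 — 8 statements merged into one kernel-verified Lean document; each statement's English description precedes it below -/
import Mathlib

section
/- Let G be a simple graph with n vertices and e edges, and let c = 2e/n². Then the number N' of 4-edge walks in G satisfies N' ≥ c⁴·n⁵, i.e., N' ≥ 16·e⁴/n³. -/
open Finset

/-- The number of 4-edge walks in `G`: sequences of 5 (not necessarily distinct)
vertices with consecutive vertices adjacent. -/
noncomputable def walkCount4 {V : Type*} (G : SimpleGraph V) : ℕ :=
  Nat.card {f : Fin 5 → V // ∀ i : Fin 4, G.Adj (f i.castSucc) (f i.succ)}

section Aux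

variable {V : Type*} [Fintype V] (G : SimpleGraph V)

lemma cardP [DecidableEq V] [DecidableRel G.Adj] (v : V) :
    Nat.card {q : V × V // G.Adj v q.1 ∧ G.Adj q.1 q.2} =
      ∑ a ∈ G.neighborFinset v, G.degree a := by
  classical
  have e : {q : V × V // G.Adj v q.1 ∧ G.Adj q.1 q.2} ≃
      Σ a : G.neighborFinset v, G.neighborFinset (a : V) :=
    { toFun := fun q => ⟨⟨q.1.1, by simp [q.2.1]⟩, ⟨q.1.2, by simp [q.2.2]⟩⟩
      invFun := fun p => ⟨(p.1, p.2),
        (G.mem_neighborFinset _ _).mp p.1.2, (G.mem_neighborFinset _ _).mp p.2.2⟩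
      left_inv := fun q => rfl
      right_inv := fun p => rfl }
  rw [Nat.card_congr e, Nat.card_eq_fintype_card, Fintype.card_sigma]
  simp only [Fintype.card_coe]
  exact Finset.sum_coe_sort (G.neighborFinset v) (fun a => (G.neighborFinset a).card)

def walk4Equiv {V : Type*} (G : SimpleGraph V) :
    {f : Fin 5 → V // ∀ i : Fin 4, G.Adj (f i.castSucc) (f i.succ)} ≃
      Σ v : V, ({q : V × V // G.Adj v q.1 ∧ G.Adj q.1 q.2} ×
                {q : V × V // G.Adj v q.1 ∧ G.Adj q.1 q.2}) :=
  { toFun := fun f => ⟨f.1 2,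
      ⟨(f.1 1, f.1 0), (f.2 1).symm, (f.2 0).symm⟩,
      ⟨(f.1 3, f.1 4), f.2 2, f.2 3⟩⟩
    invFun := fun p => ⟨![p.2.1.1.2, p.2.1.1.1, p.1, p.2.2.1.1, p.2.2.1.2], by
      intro i
      fin_cases i
      · exact p.2.1.2.2.symm
      · exact p.2.1.2.1.symm
      · exact p.2.2.2.1
      · exact p.2.2.2.2⟩
    left_inv := fun f => by
      apply Subtype.ext
      funext i
      fin_cases i <;> rfl
    right_inv := fun p => rfl }

lemma walkCount4_eq [DecidableEq V] [DecidableRel G.Adj] :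
    walkCount4 G = ∑ v : V, (∑ a ∈ G.neighborFinset v, G.degree a) ^ 2 := by
  classical
  rw [walkCount4, Nat.card_congr (walk4Equiv G), Nat.card_eq_fintype_card,
    Fintype.card_sigma]
  apply Finset.sum_congr rfl
  intro v _
  rw [Fintype.card_prod, sq, ← cardP G v, Nat.card_eq_fintype_card]

lemma sum_w2_eq [DecidableEq V] [DecidableRel G.Adj] :
    ∑ v : V, (∑ a ∈ G.neighborFinset v, G.degree a) = ∑ a : V, G.degree a ^ 2 := by
  have h : ∀ v : V, ∑ a ∈ G.neighborFinset v, G.degree a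
      = ∑ a : V, if G.Adj v a then G.degree a else 0 := by
    intro v
    rw [SimpleGraph.neighborFinset_eq_filter, Finset.sum_filter]
  simp only [h]
  rw [Finset.sum_comm]
  apply Finset.sum_congr rfl
  intro a _
  have : ∀ v : V, (if G.Adj v a then G.degree a else 0)
      = if G.Adj a v then G.degree a else 0 := by
    intro v
    congr 1
    simp [G.adj_comm]
  simp only [this]
  rw [← Finset.sum_filter, Finset.sum_const, ← SimpleGraph.neighborFinset_eq_filter,
    SimpleGraph.card_neighborFinset_eq_degree, smul_eq_mul, sq]

end Aux
theorem walk4_lower_bound {V : Type*} [Fintype V] (G : SimpleGraph V)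
    (n e : ℕ) (hn : n = Fintype.card V) (he : e = Nat.card G.edgeSet)
    (c : ℝ) (hc : c = 2 * e / (n : ℝ) ^ 2) :
    c ^ 4 * (n : ℝ) ^ 5 ≤ (walkCount4 G : ℝ) ∧
    16 * (e : ℝ) ^ 4 / (n : ℝ) ^ 3 ≤ (walkCount4 G : ℝ) := by
  classical
  have hW4 : (walkCount4 G : ℝ)
      = ∑ v : V, ((∑ a ∈ G.neighborFinset v, (G.degree a : ℝ))) ^ 2 := by
    rw [walkCount4_eq G]
    push_cast
    rfl
  rcases Nat.eq_zero_or_pos n with hn0 | hnpos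
  · subst hn0
    have hc0 : c = 0 := by simp [hc]
    constructor
    · simp [hc0]
    · simp
  · have hnR : (0:ℝ) < n := by exact_mod_cast hnpos
    -- degree sum = 2e
    have hD : ∑ v : V, (G.degree v : ℝ) = 2 * e := by
      have := G.sum_degrees_eq_twice_card_edges
      have he' : e = #G.edgeFinset := by
        rw [he, SimpleGraph.edgeFinset_card, Nat.card_eq_fintype_card]
      rw [he']
      exact_mod_cast this
    have hcard : (#(univ : Finset V) : ℝ) = n := by
      rw [hn]; simp
    -- Cauchy-Schwarz 1
    have cs1 : (2 * (e:ℝ)) ^ 2 ≤ n * ∑ v : V, (G.degree v : ℝ) ^ 2 := by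
      rw [← hD, ← hcard]
      exact sq_sum_le_card_mul_sum_sq
    -- sum of w2 = sum deg^2
    have hT : ∑ v : V, (∑ a ∈ G.neighborFinset v, (G.degree a : ℝ))
        = ∑ v : V, (G.degree v : ℝ) ^ 2 := by
      have := sum_w2_eq G
      exact_mod_cast congrArg (fun x : ℕ => (x:ℝ)) this
    -- Cauchy-Schwarz 2
    have cs2 : (∑ v : V, (G.degree v : ℝ) ^ 2) ^ 2 ≤ n * (walkCount4 G : ℝ) := by
      rw [← hT, hW4, ← hcard]
      exact sq_sum_le_card_mul_sum_sq
    have hS2nn : (0:ℝ) ≤ ∑ v : V, (G.degree v : ℝ) ^ 2 := by positivity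
    have key : 16 * (e:ℝ) ^ 4 ≤ n ^ 3 * (walkCount4 G : ℝ) := by
      have h1 : ((2*(e:ℝ))^2)^2 ≤ (n * ∑ v : V, (G.degree v : ℝ) ^ 2)^2 :=
        pow_le_pow_left₀ (by positivity) cs1 2
      calc 16 * (e:ℝ)^4 = ((2*(e:ℝ))^2)^2 := by ring
        _ ≤ (n * ∑ v : V, (G.degree v : ℝ) ^ 2)^2 := h1
        _ = n^2 * (∑ v : V, (G.degree v : ℝ) ^ 2)^2 := by ring
        _ ≤ n^2 * (n * (walkCount4 G : ℝ)) := by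
            apply mul_le_mul_of_nonneg_left cs2 (by positivity)
        _ = n^3 * (walkCount4 G : ℝ) := by ring
    have h2 : 16 * (e : ℝ) ^ 4 / (n : ℝ) ^ 3 ≤ (walkCount4 G : ℝ) := by
      rw [div_le_iff₀ (by positivity)]
      linarith [key]
    refine ⟨?_, h2⟩
    have : c ^ 4 * (n : ℝ) ^ 5 = 16 * (e : ℝ) ^ 4 / (n : ℝ) ^ 3 := by
      rw [hc]; field_simp; ring
    rw [this]; exact h2
end

section
/- Let G be a simple graph and let N' denote the number of 4-edge walks in G. Then N' ≤ Σ_{u,w ∈ V(G)} deg(u)·deg(w)·min(deg(u), deg(w)), where the sum ranges over all ordered pairs of (not necessarily distinct) vertices. -/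
theorem walk4_le_sum_min_deg {V : Type*} [Fintype V]
    (G : SimpleGraph V) [DecidableRel G.Adj] :
    walkCount4 G ≤ ∑ u : V, ∑ w : V,
      G.degree u * G.degree w * min (G.degree u) (G.degree w) := by
  classical
  let T : Type _ := Σ u : V, Σ w : V,
    {x // x ∈ G.neighborFinset u} × {x // x ∈ G.neighborFinset w} ×
      {x // x ∈ G.neighborFinset u ∩ G.neighborFinset w}
  let e : {f : Fin 5 → V // ∀ i : Fin 4, G.Adj (f i.castSucc) (f i.succ)} → T :=
    fun p =>
      ⟨p.1 1, p.1 3,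
        ⟨p.1 0, by simpa using (p.2 0).symm⟩,
        ⟨p.1 4, by simpa using (p.2 3)⟩,
        ⟨p.1 2, by
          simp only [Finset.mem_inter, SimpleGraph.mem_neighborFinset]
          exact ⟨p.2 1, (p.2 2).symm⟩⟩⟩
  let d : T → (Fin 5 → V) := fun t =>
    ![(t.2.2.1 : V), t.1, (t.2.2.2.2 : V), t.2.1, (t.2.2.2.1 : V)]
  have hd : ∀ p, d (e p) = p.1 := by
    intro p; funext i; fin_cases i <;> rfl
  have hinj : Function.Injective e := by
    intro a b h
    apply Subtype.ext
    rw [← hd a, ← hd b, h]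
  have hle : walkCount4 G ≤ Nat.card T := Nat.card_le_card_of_injective e hinj
  have hT : Nat.card T = ∑ u : V, ∑ w : V,
      G.degree u * (G.degree w * (G.neighborFinset u ∩ G.neighborFinset w).card) := by
    rw [Nat.card_eq_fintype_card, Fintype.card_sigma]
    refine Finset.sum_congr rfl fun u _ => ?_
    rw [Fintype.card_sigma]
    refine Finset.sum_congr rfl fun w _ => ?_
    rw [Fintype.card_prod, Fintype.card_prod, Fintype.card_coe, Fintype.card_coe,
      Fintype.card_coe, SimpleGraph.card_neighborFinset_eq_degree,
      SimpleGraph.card_neighborFinset_eq_degree]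
  refine le_trans hle ((le_of_eq hT).trans ?_)
  refine Finset.sum_le_sum fun u _ => Finset.sum_le_sum fun w _ => ?_
  have hmin : (G.neighborFinset u ∩ G.neighborFinset w).card
      ≤ min (G.degree u) (G.degree w) :=
    le_min (Finset.card_le_card Finset.inter_subset_left)
      (Finset.card_le_card Finset.inter_subset_right)
  rw [← mul_assoc]
  exact Nat.mul_le_mul_left _ hmin
end

section
/- Let 0 ≤ c ≤ 1. Let A₁(c) : [0,1)² → [0,1] be the indicator function of the set {(x,y) : min(x,y) < 1−√(1−c)} and let A₂(c) : [0,1)² → [0,1] be the indicator function of the set {(x,y) : max(x,y) < √c}. Then ∫₀¹∫₀¹ A₁(c)(x,y) dx dy = ∫₀¹∫₀¹ A₂(c)(x,y) dx dy = c, and S(A₁(c)) = (1−√(1−c))²·((c+1)√(1−c)+c) and S(A₂(c)) = c^{5/2}. -/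
open MeasureTheory

/-- `ell A x = ∫₀¹ A(x,y) dy`. -/
noncomputable def ell (A : ℝ → ℝ → ℝ) (x : ℝ) : ℝ := ∫ y in (0:ℝ)..1, A x y

/-- `S(A) = ∫₀¹∫₀¹ ℓ(x)·ℓ(y)·min(ℓ(x),ℓ(y)) dx dy`. -/
noncomputable def Sfun (A : ℝ → ℝ → ℝ) : ℝ :=
  ∫ x in (0:ℝ)..1, ∫ y in (0:ℝ)..1, ell A x * ell A y * min (ell A x) (ell A y)

/-- The quasi-star step function: indicator of `{(x,y) : min x y < 1 - √(1-c)}`. -/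
noncomputable def Aone (c : ℝ) : ℝ → ℝ → ℝ :=
  fun x y => if min x y < 1 - Real.sqrt (1 - c) then 1 else 0

/-- The quasi-clique step function: indicator of `{(x,y) : max x y < √c}`. -/
noncomputable def Atwo (c : ℝ) : ℝ → ℝ → ℝ :=
  fun x y => if max x y < Real.sqrt c then 1 else 0

/-!
For both kernels the degree function `ℓ` is a two-valued step function on `[0,1)`: it jumps at
`t = 1 - √(1-c)` from `1` to `t` for the quasi-star and at `t = √c` from `√c` to `0` for the
quasi-clique. Integrating any function `h` of such a step function gives `t·h(a) + (1-t)·h(b)`, so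
both the edge density and `S` reduce to polynomial identities in `t`.
-/

open Set

noncomputable def twoStep (t a b x : ℝ) : ℝ := if x < t then a else b

theorem twoStep_eq_indicator_add (t a b x : ℝ) :
    twoStep t a b x = (Iio t).indicator (fun _ => a - b) x + b := by
  by_cases hx : x < t <;> simp [twoStep, hx]

section UnitInterval

variable {t : ℝ}

theorem integral_twoStep (ht0 : 0 ≤ t) (ht1 : t ≤ 1) (a b : ℝ) :
    ∫ x in (0:ℝ)..1, twoStep t a b x = t * a + (1 - t) * b := by
  have hIoo : Ioc (0:ℝ) 1 ∩ Iio t = Ioo 0 t := by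
    ext x
    simp only [mem_inter_iff, mem_Ioc, mem_Iio, mem_Ioo]
    exact ⟨fun h => ⟨h.1.1, h.2⟩, fun h => ⟨⟨h.1, by linarith [h.2]⟩, h.2⟩⟩
  have hind : IntervalIntegrable ((Iio t).indicator fun _ => a - b) volume 0 1 :=
    (intervalIntegrable_iff_integrableOn_Ioc_of_le zero_le_one).2
      ((integrableOn_const measure_Ioc_lt_top.ne).indicator measurableSet_Iio)
  simp only [twoStep_eq_indicator_add]
  rw [intervalIntegral.integral_add hind intervalIntegrable_const, intervalIntegral.integral_const,
    intervalIntegral.integral_of_le zero_le_one, setIntegral_indicator measurableSet_Iio, hIoo,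
    setIntegral_const, Real.volume_real_Ioo_of_le ht0, smul_eq_mul, smul_eq_mul]
  ring

theorem integral_comp_twoStep (ht0 : 0 ≤ t) (ht1 : t ≤ 1) (h : ℝ → ℝ) (a b : ℝ) :
    ∫ x in (0:ℝ)..1, h (twoStep t a b x) = t * h a + (1 - t) * h b := by
  simp only [twoStep, apply_ite h]
  exact integral_twoStep ht0 ht1 (h a) (h b)

theorem Sfun_eq_of_ell_eq_twoStep (ht0 : 0 ≤ t) (ht1 : t ≤ 1) {A : ℝ → ℝ → ℝ} {a b : ℝ}
    (hA : ell A = twoStep t a b) :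
    Sfun A = t ^ 2 * a ^ 3 + 2 * t * (1 - t) * (a * b * min a b) + (1 - t) ^ 2 * b ^ 3 := by
  rw [Sfun, hA, integral_comp_twoStep ht0 ht1
      (fun p => ∫ y in (0:ℝ)..1, p * twoStep t a b y * min p (twoStep t a b y)),
    integral_comp_twoStep ht0 ht1 (fun q => a * q * min a q),
    integral_comp_twoStep ht0 ht1 (fun q => b * q * min b q), min_comm b a, min_self, min_self]
  ring

theorem ell_minThreshold (ht0 : 0 ≤ t) (ht1 : t ≤ 1) :
    ell (fun x y => if min x y < t then 1 else 0) = twoStep t 1 t := by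
  funext x
  by_cases hx : x < t
  · simp [ell, twoStep, hx]
  · simpa [ell, twoStep, hx] using integral_twoStep ht0 ht1 1 0

theorem ell_maxThreshold (ht0 : 0 ≤ t) (ht1 : t ≤ 1) :
    ell (fun x y => if max x y < t then 1 else 0) = twoStep t t 0 := by
  funext x
  by_cases hx : x < t
  · simpa [ell, twoStep, hx] using integral_twoStep ht0 ht1 1 0
  · simp [ell, twoStep, hx]

end UnitInterval

theorem quasiStar_quasiClique_values (c : ℝ) (hc0 : 0 ≤ c) (hc1 : c ≤ 1) :
    (∫ x in (0:ℝ)..1, ∫ y in (0:ℝ)..1, Aone c x y) = c ∧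
    (∫ x in (0:ℝ)..1, ∫ y in (0:ℝ)..1, Atwo c x y) = c ∧
    Sfun (Aone c) = (1 - Real.sqrt (1 - c)) ^ 2 * ((c + 1) * Real.sqrt (1 - c) + c) ∧
    Sfun (Atwo c) = c ^ ((5 : ℝ) / 2) := by
  set s := Real.sqrt (1 - c)
  set u := Real.sqrt c with hu
  have hs2 : s ^ 2 = 1 - c := Real.sq_sqrt (by linarith)
  have hs0 : 0 ≤ s := Real.sqrt_nonneg _
  have hs1 : s ≤ 1 := Real.sqrt_le_one.2 (by linarith)
  have hu2 : u ^ 2 = c := Real.sq_sqrt hc0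
  have hu0 : 0 ≤ u := Real.sqrt_nonneg _
  have hu1 : u ≤ 1 := Real.sqrt_le_one.2 hc1
  have hAone : ell (Aone c) = twoStep (1 - s) 1 (1 - s) :=
    ell_minThreshold (by linarith) (by linarith)
  have hAtwo : ell (Atwo c) = twoStep u u 0 := ell_maxThreshold hu0 hu1
  have hu5 : u ^ 5 = c ^ ((5 : ℝ) / 2) := by
    rw [hu, Real.sqrt_eq_rpow, ← Real.rpow_natCast, ← Real.rpow_mul hc0]
    norm_num
  refine ⟨?_, ?_, ?_, ?_⟩
  · change ∫ x in (0:ℝ)..1, ell (Aone c) x = c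
    rw [hAone, integral_twoStep (by linarith) (by linarith)]
    linear_combination -hs2
  · change ∫ x in (0:ℝ)..1, ell (Atwo c) x = c
    rw [hAtwo, integral_twoStep hu0 hu1]
    linear_combination hu2
  · rw [Sfun_eq_of_ell_eq_twoStep (by linarith) (by linarith) hAone, min_eq_right (by linarith)]
    linear_combination (-(1 - s) ^ 2 * (1 + s)) * hs2
  · rw [Sfun_eq_of_ell_eq_twoStep hu0 hu1 hAtwo, ← hu5]
    ring
end

section
/- Let t₁, …, t_k be positive reals and let ℓ₁ > ℓ₂ > … > ℓ_k ≥ 0. Let β ∈ {1, …, k} and let α = β−1 or α = β+1, with 1 ≤ α ≤ k. For x > 0 define t_α(x) = t_α + t_β − x, t_β(x) = x, ℓ_β(x) = ℓ_α + (t_β/x)·(ℓ_β − ℓ_α), and t_i(x) = t_i for i ∉ {α, β}, ℓ_i(x) = ℓ_i for i ≠ β. Define S(x) = Σ_{i=1}^{k} Σ_{j=1}^{k} t_i(x)·t_j(x)·ℓ_i(x)·ℓ_j(x)·min(ℓ_i(x), ℓ_j(x)). Then x = t_β is not a local maximum point of S: every open neighborhood of t_β contains a point x with S(x) > S(t_β).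 -/
lemma sum_split (I : Finset ℕ) (a b : ℕ) (ha : a ∈ I) (hb : b ∈ I) (hne : a ≠ b)
    (f : ℕ → ℕ → ℝ) :
    ∑ i ∈ I, ∑ j ∈ I, f i j =
      (f a a + f a b + f b a + f b b)
      + ∑ j ∈ (I.erase a).erase b, (f a j + f b j)
      + ∑ i ∈ (I.erase a).erase b, (f i a + f i b)
      + ∑ i ∈ (I.erase a).erase b, ∑ j ∈ (I.erase a).erase b, f i j := by
  have hb' : b ∈ I.erase a := Finset.mem_erase.mpr ⟨hne.symm, hb⟩
  have h1 : ∀ g : ℕ → ℝ, ∑ i ∈ I, g i = g a + (g b + ∑ i ∈ (I.erase a).erase b, g i) := by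
    intro g
    rw [Finset.add_sum_erase _ _ hb', Finset.add_sum_erase _ _ ha]
  rw [h1]
  simp only [h1, Finset.sum_add_distrib]
  ring

lemma Scomp (k α β : ℕ) (t ℓ : ℕ → ℝ) (x m : ℝ)
    (hαI : α ∈ Finset.Icc 1 k) (hβI : β ∈ Finset.Icc 1 k) (hne : α ≠ β)
    (hlo : ∀ j ∈ ((Finset.Icc 1 k).erase α).erase β, j < min α β →
        m ≤ ℓ j ∧ ℓ α ≤ ℓ j)
    (hhi : ∀ j ∈ ((Finset.Icc 1 k).erase α).erase β, ¬ j < min α β →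
        ℓ j ≤ m ∧ ℓ j ≤ ℓ α) :
    (∑ i ∈ Finset.Icc 1 k, ∑ j ∈ Finset.Icc 1 k,
      (if i = α then t α + t β - x else if i = β then x else t i) *
      (if j = α then t α + t β - x else if j = β then x else t j) *
      (if i = β then m else ℓ i) *
      (if j = β then m else ℓ j) *
      min (if i = β then m else ℓ i) (if j = β then m else ℓ j)) =
      (∑ i ∈ ((Finset.Icc 1 k).erase α).erase β,
        ∑ j ∈ ((Finset.Icc 1 k).erase α).erase β,
          t i * t j * ℓ i * ℓ j * min (ℓ i) (ℓ j))
      + 2 * (∑ j ∈ (((Finset.Icc 1 k).erase α).erase β).filter (· < min α β), t j * ℓ j)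
          * ((t α + t β - x) * ℓ α ^ 2 + x * m ^ 2)
      + 2 * (∑ j ∈ (((Finset.Icc 1 k).erase α).erase β).filter (¬ · < min α β), t j * ℓ j ^ 2)
          * ((t α + t β - x) * ℓ α + x * m)
      + ((t α + t β - x) ^ 2 * ℓ α ^ 3 + x ^ 2 * m ^ 3
          + 2 * (t α + t β - x) * x * ℓ α * m * min (ℓ α) m) := by
  set R := ((Finset.Icc 1 k).erase α).erase β with hR
  rw [sum_split _ α β hαI hβI hne]
  have hmemR : ∀ j ∈ R, j ≠ α ∧ j ≠ β := by
    intro j hj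
    rw [hR, Finset.mem_erase, Finset.mem_erase] at hj
    exact ⟨hj.2.1, hj.1⟩
  have hba : ¬ (β = α) := fun h => hne h.symm
  -- corner block
  have hcorner : ((if α = α then t α + t β - x else if α = β then x else t α) *
        (if α = α then t α + t β - x else if α = β then x else t α) *
        (if α = β then m else ℓ α) * (if α = β then m else ℓ α) *
        min (if α = β then m else ℓ α) (if α = β then m else ℓ α)
      + (if α = α then t α + t β - x else if α = β then x else t α) *
        (if β = α then t α + t β - x else if β = β then x else t β) *
        (if α = β then m else ℓ α) * (if β = β then m else ℓ β) *
        min (if α = β then m else ℓ α) (if β = β then m else ℓ β)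
      + (if β = α then t α + t β - x else if β = β then x else t β) *
        (if α = α then t α + t β - x else if α = β then x else t α) *
        (if β = β then m else ℓ β) * (if α = β then m else ℓ α) *
        min (if β = β then m else ℓ β) (if α = β then m else ℓ α)
      + (if β = α then t α + t β - x else if β = β then x else t β) *
        (if β = α then t α + t β - x else if β = β then x else t β) *
        (if β = β then m else ℓ β) * (if β = β then m else ℓ β) *
        min (if β = β then m else ℓ β) (if β = β then m else ℓ β))
      = (t α + t β - x) ^ 2 * ℓ α ^ 3 + x ^ 2 * m ^ 3
          + 2 * (t α + t β - x) * x * ℓ α * m * min (ℓ α) m := by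
    simp only [eq_self_iff_true, if_true, if_neg hne, if_neg hba, min_self]
    rw [min_comm m (ℓ α)]
    ring
  rw [hcorner]
  -- the two cross sums are equal
  have hsymm : ∀ j ∈ R,
      ((if j = α then t α + t β - x else if j = β then x else t j) *
        (if α = α then t α + t β - x else if α = β then x else t α) *
        (if j = β then m else ℓ j) * (if α = β then m else ℓ α) *
        min (if j = β then m else ℓ j) (if α = β then m else ℓ α)
      + (if j = α then t α + t β - x else if j = β then x else t j) *
        (if β = α then t α + t β - x else if β = β then x else t β) *
        (if j = β then m else ℓ j) * (if β = β then m else ℓ β) *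
        min (if j = β then m else ℓ j) (if β = β then m else ℓ β)) =
      ((if α = α then t α + t β - x else if α = β then x else t α) *
        (if j = α then t α + t β - x else if j = β then x else t j) *
        (if α = β then m else ℓ α) * (if j = β then m else ℓ j) *
        min (if α = β then m else ℓ α) (if j = β then m else ℓ j)
      + (if β = α then t α + t β - x else if β = β then x else t β) *
        (if j = α then t α + t β - x else if j = β then x else t j) *
        (if β = β then m else ℓ β) * (if j = β then m else ℓ j) *
        min (if β = β then m else ℓ β) (if j = β then m else ℓ j)) := by
    intro j hj
    obtain ⟨hjα, hjβ⟩ := hmemR j hj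
    simp only [eq_self_iff_true, if_true, if_neg hne, if_neg hba, if_neg hjα, if_neg hjβ]
    rw [min_comm (ℓ j) (ℓ α), min_comm (ℓ j) m]
    ring
  rw [Finset.sum_congr rfl hsymm]
  -- cross sum evaluation
  have hcross : (∑ j ∈ R,
      ((if α = α then t α + t β - x else if α = β then x else t α) *
        (if j = α then t α + t β - x else if j = β then x else t j) *
        (if α = β then m else ℓ α) * (if j = β then m else ℓ j) *
        min (if α = β then m else ℓ α) (if j = β then m else ℓ j)
      + (if β = α then t α + t β - x else if β = β then x else t β) *
        (if j = α then t α + t β - x else if j = β then x else t j) *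
        (if β = β then m else ℓ β) * (if j = β then m else ℓ j) *
        min (if β = β then m else ℓ β) (if j = β then m else ℓ j))) =
      (∑ j ∈ R.filter (· < min α β), t j * ℓ j) * ((t α + t β - x) * ℓ α ^ 2 + x * m ^ 2)
      + (∑ j ∈ R.filter (¬ · < min α β), t j * ℓ j ^ 2) * ((t α + t β - x) * ℓ α + x * m) := by
    rw [← Finset.sum_filter_add_sum_filter_not R (· < min α β), Finset.sum_mul, Finset.sum_mul]
    congr 1
    · apply Finset.sum_congr rfl
      intro j hj
      rw [Finset.mem_filter] at hj
      obtain ⟨hjα, hjβ⟩ := hmemR j hj.1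
      obtain ⟨h1, h2⟩ := hlo j hj.1 hj.2
      simp only [eq_self_iff_true, if_true, if_neg hne, if_neg hba, if_neg hjα, if_neg hjβ]
      rw [min_eq_left h2, min_eq_left h1]
      ring
    · apply Finset.sum_congr rfl
      intro j hj
      rw [Finset.mem_filter] at hj
      obtain ⟨hjα, hjβ⟩ := hmemR j hj.1
      obtain ⟨h1, h2⟩ := hhi j hj.1 hj.2
      simp only [eq_self_iff_true, if_true, if_neg hne, if_neg hba, if_neg hjα, if_neg hjβ]
      rw [min_eq_right h2, min_eq_right h1]
      ring
  rw [hcross]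
  -- remainder double sum
  have hrest : (∑ i ∈ R, ∑ j ∈ R,
      ((if i = α then t α + t β - x else if i = β then x else t i) *
        (if j = α then t α + t β - x else if j = β then x else t j) *
        (if i = β then m else ℓ i) * (if j = β then m else ℓ j) *
        min (if i = β then m else ℓ i) (if j = β then m else ℓ j))) =
      ∑ i ∈ R, ∑ j ∈ R, t i * t j * ℓ i * ℓ j * min (ℓ i) (ℓ j) := by
    apply Finset.sum_congr rfl
    intro i hi
    apply Finset.sum_congr rfl
    intro j hj
    obtain ⟨hiα, hiβ⟩ := hmemR i hi
    obtain ⟨hjα, hjβ⟩ := hmemR j hj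
    simp only [if_neg hiα, if_neg hiβ, if_neg hjα, if_neg hjβ]
  rw [hrest]
  ring

lemma mball (tβ ℓα ℓβ gap δ : ℝ) (htβ : 0 < tβ) (hgap : 0 < gap)
    (hδ : δ = min (tβ / 2) (gap * tβ / (2 * (|ℓβ - ℓα| + 1)))) :
    ∀ x : ℝ, |x - tβ| < δ →
      tβ / 2 < x ∧ |ℓα + tβ / x * (ℓβ - ℓα) - ℓβ| < gap := by
  intro x hx
  subst hδ
  have h1 : |x - tβ| < tβ / 2 := lt_of_lt_of_le hx (min_le_left _ _)
  have h2 : |x - tβ| < gap * tβ / (2 * (|ℓβ - ℓα| + 1)) :=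
    lt_of_lt_of_le hx (min_le_right _ _)
  have hx1 : tβ / 2 < x := by
    have := abs_lt.mp h1
    linarith [this.1]
  have hx0 : 0 < x := by linarith
  refine ⟨hx1, ?_⟩
  have hrw : ℓα + tβ / x * (ℓβ - ℓα) - ℓβ = (ℓβ - ℓα) * (tβ - x) / x := by
    field_simp
    ring
  rw [hrw, abs_div, abs_of_pos hx0, abs_mul, abs_sub_comm tβ x, div_lt_iff₀ hx0]
  set d := |ℓβ - ℓα| with hd
  have hd0 : 0 ≤ d := abs_nonneg _
  have h3 : d * |x - tβ| ≤ d * (gap * tβ / (2 * (d + 1))) :=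
    mul_le_mul_of_nonneg_left h2.le hd0
  have h4 : d * (gap * tβ / (2 * (d + 1))) < gap * x := by
    have he : d * (gap * tβ / (2 * (d + 1))) = d * gap * tβ / (2 * (d + 1)) := by ring
    rw [he, div_lt_iff₀ (by positivity : (0:ℝ) < 2 * (d + 1))]
    nlinarith [mul_pos hgap hx0, mul_nonneg (mul_nonneg hd0 hgap.le)
      (show (0:ℝ) ≤ 2 * x - tβ by linarith)]
  linarith

lemma key_lemma (S : ℝ → ℝ) (T δ a b : ℝ) (hT : 0 < T) (hδ : 0 < δ)
    (hδT : δ ≤ T / 2) (ha : 0 ≤ a) (hb : 0 < b)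
    (hdiff : ∀ x, |x - T| < δ → 0 < x → S x - S T = (x - T) * (a - b / (x * T))) :
    ∀ ε > 0, ∃ x : ℝ, |x - T| < ε ∧ S T < S x := by
  intro ε hε
  set e := min ε δ / 2 with he
  have he0 : 0 < e := by positivity
  have heε : e < ε := by
    have := min_le_left ε δ
    rw [he]; linarith
  have heδ : e < δ := by
    have := min_le_right ε δ
    rw [he]; linarith
  by_cases hc : b / (T * T) ≤ a
  · refine ⟨T + e, ?_, ?_⟩
    · rw [show T + e - T = e by ring, abs_of_pos he0]; exact heε
    · have h1 := hdiff (T + e)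
        (by rw [show T + e - T = e by ring, abs_of_pos he0]; exact heδ) (by linarith)
      have h2 : b / ((T + e) * T) < b / (T * T) :=
        div_lt_div_of_pos_left hb (by positivity) (by nlinarith)
      have h3 : 0 < a - b / ((T + e) * T) := by linarith
      nlinarith [mul_pos he0 h3]
  · push_neg at hc
    refine ⟨T - e, ?_, ?_⟩
    · rw [show T - e - T = -e by ring, abs_neg, abs_of_pos he0]; exact heε
    · have hx0 : 0 < T - e := by linarith
      have h1 := hdiff (T - e)
        (by rw [show T - e - T = -e by ring, abs_neg, abs_of_pos he0]; exact heδ) hx0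
      have h2 : b / (T * T) < b / ((T - e) * T) :=
        div_lt_div_of_pos_left hb (by positivity) (by nlinarith)
      have h3 : a - b / ((T - e) * T) < 0 := by linarith
      nlinarith [mul_pos_of_neg_of_neg (show T - e - T < 0 by linarith) h3]

set_option maxHeartbeats 2000000 in
theorem transformation_not_local_max (k : ℕ) (t ℓ : ℕ → ℝ) (α β : ℕ)
    (hβ1 : 1 ≤ β) (hβk : β ≤ k) (hα1 : 1 ≤ α) (hαk : α ≤ k)
    (hαβ : α = β - 1 ∨ α = β + 1)
    (ht : ∀ i, 1 ≤ i → i ≤ k → 0 < t i)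
    (hℓ : ∀ i j, 1 ≤ i → i < j → j ≤ k → ℓ j < ℓ i)
    (hℓk : 0 ≤ ℓ k)
    (S : ℝ → ℝ)
    (hS : S = fun x => ∑ i ∈ Finset.Icc 1 k, ∑ j ∈ Finset.Icc 1 k,
      (if i = α then t α + t β - x else if i = β then x else t i) *
      (if j = α then t α + t β - x else if j = β then x else t j) *
      (if i = β then ℓ α + t β / x * (ℓ β - ℓ α) else ℓ i) *
      (if j = β then ℓ α + t β / x * (ℓ β - ℓ α) else ℓ j) *
      min (if i = β then ℓ α + t β / x * (ℓ β - ℓ α) else ℓ i)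
        (if j = β then ℓ α + t β / x * (ℓ β - ℓ α) else ℓ j)) :
    ∀ ε > 0, ∃ x : ℝ, |x - t β| < ε ∧ S (t β) < S x := by
  have hne : α ≠ β := by omega
  have hαI : α ∈ Finset.Icc 1 k := Finset.mem_Icc.mpr ⟨hα1, hαk⟩
  have hβI : β ∈ Finset.Icc 1 k := Finset.mem_Icc.mpr ⟨hβ1, hβk⟩
  have htβ : 0 < t β := ht β hβ1 hβk
  have hℓ0 : ∀ j, 1 ≤ j → j ≤ k → 0 ≤ ℓ j := by
    intro j h1 h2
    rcases eq_or_lt_of_le h2 with h | h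
    · rw [h]; exact hℓk
    · exact le_of_lt (lt_of_le_of_lt hℓk (hℓ j k h1 h le_rfl))
  have hmemIcc : ∀ j ∈ ((Finset.Icc 1 k).erase α).erase β,
      1 ≤ j ∧ j ≤ k ∧ j ≠ α ∧ j ≠ β := by
    intro j hj
    simp only [Finset.mem_erase, Finset.mem_Icc] at hj
    exact ⟨hj.2.2.1, hj.2.2.2, hj.2.1, hj.1⟩
  have hP : 0 ≤ ∑ j ∈ (((Finset.Icc 1 k).erase α).erase β).filter (· < min α β),
      t j * ℓ j := by
    apply Finset.sum_nonneg
    intro j hj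
    obtain ⟨h1, h2, _, _⟩ := hmemIcc j (Finset.mem_of_mem_filter j hj)
    exact mul_nonneg (ht j h1 h2).le (hℓ0 j h1 h2)
  rcases hαβ with hcase | hcase
  · -- α = β - 1
    have hβ2 : 2 ≤ β := by omega
    have hαβlt : α < β := by omega
    have hℓβα : ℓ β < ℓ α := hℓ α β hα1 hαβlt hβk
    have hℓα0 : 0 < ℓ α := lt_of_le_of_lt hℓk (hℓ α k hα1 (by omega) le_rfl)
    set gap := (if β < k then ℓ β - ℓ (β + 1) else 1 : ℝ) with hgapdef
    have hgap : 0 < gap := by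
      rw [hgapdef]; split_ifs with h
      · linarith [hℓ β (β + 1) hβ1 (by omega) (by omega)]
      · norm_num
    set δ := min (t β / 2) (gap * t β / (2 * (|ℓ β - ℓ α| + 1))) with hδdef
    have hδ0 : 0 < δ := lt_min (by positivity) (by positivity)
    have hδt : δ ≤ t β / 2 := min_le_left _ _
    have hball := mball (t β) (ℓ α) (ℓ β) gap δ htβ hgap hδdef
    have hlo' : ∀ x : ℝ, |x - t β| < δ →
        ∀ j ∈ ((Finset.Icc 1 k).erase α).erase β, j < min α β →
          (ℓ α + t β / x * (ℓ β - ℓ α)) ≤ ℓ j ∧ ℓ α ≤ ℓ j := by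
      intro x hx j hj hjlt
      obtain ⟨hx1, hx2⟩ := hball x hx
      have hx0 : 0 < x := by linarith
      obtain ⟨hj1, hjk, hjα, hjβ⟩ := hmemIcc j hj
      have hjα' : j < α := by omega
      have h5 : ℓ α < ℓ j := hℓ j α hj1 hjα' hαk
      have h6 : t β / x * (ℓ β - ℓ α) ≤ 0 :=
        mul_nonpos_of_nonneg_of_nonpos (by positivity) (by linarith)
      constructor <;> linarith
    have hhi' : ∀ x : ℝ, |x - t β| < δ →
        ∀ j ∈ ((Finset.Icc 1 k).erase α).erase β, ¬ j < min α β →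
          ℓ j ≤ (ℓ α + t β / x * (ℓ β - ℓ α)) ∧ ℓ j ≤ ℓ α := by
      intro x hx j hj hjge
      obtain ⟨hx1, hx2⟩ := hball x hx
      obtain ⟨hj1, hjk, hjα, hjβ⟩ := hmemIcc j hj
      have hjβ' : β + 1 ≤ j := by omega
      have hβk' : β < k := by omega
      have hgapval : gap = ℓ β - ℓ (β + 1) := by rw [hgapdef, if_pos hβk']
      have h7 : ℓ j ≤ ℓ (β + 1) := by
        rcases eq_or_lt_of_le hjβ' with h | h
        · rw [← h]
        · exact (hℓ (β + 1) j (by omega) h hjk).le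
      have h8 : ℓ (β + 1) < ℓ β := hℓ β (β + 1) hβ1 (by omega) hβk'
      have h9 := abs_lt.mp hx2
      constructor
      · linarith [h9.1]
      · linarith
    have hminm : ∀ x : ℝ, 0 < x →
        min (ℓ α) (ℓ α + t β / x * (ℓ β - ℓ α)) = ℓ α + t β / x * (ℓ β - ℓ α) := by
      intro x hx0
      apply min_eq_right
      have h6 : t β / x * (ℓ β - ℓ α) ≤ 0 :=
        mul_nonpos_of_nonneg_of_nonpos (by positivity) (by linarith)
      linarith
    refine key_lemma S (t β) δ (t β * (ℓ α - ℓ β) * ℓ α ^ 2)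
      ((t β * (ℓ β - ℓ α)) ^ 2 * ((t β * (ℓ β - ℓ α)) + 2 * (t α + t β) * ℓ α
        + 2 * (∑ j ∈ (((Finset.Icc 1 k).erase α).erase β).filter (· < min α β),
            t j * ℓ j)))
      htβ hδ0 hδt ?_ ?_ ?_
    · exact mul_nonneg (mul_nonneg htβ.le (by linarith)) (sq_nonneg _)
    · have hcneg : t β * (ℓ β - ℓ α) < 0 := mul_neg_of_pos_of_neg htβ (by linarith)
      have hc2 : 0 < (t β * (ℓ β - ℓ α)) ^ 2 := by
        rw [pow_two]; exact mul_pos_of_neg_of_neg hcneg hcneg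
      have h1 : 0 ≤ t β * ℓ β := mul_nonneg htβ.le (hℓ0 β hβ1 hβk)
      have h2 : 0 < t β * ℓ α := mul_pos htβ hℓα0
      have h3 : 0 < t α * ℓ α := mul_pos (ht α hα1 hαk) hℓα0
      have hpar : 0 < t β * (ℓ β - ℓ α) + 2 * (t α + t β) * ℓ α
          + 2 * (∑ j ∈ (((Finset.Icc 1 k).erase α).erase β).filter (· < min α β),
              t j * ℓ j) := by nlinarith [hP]
      exact mul_pos hc2 hpar
    · intro x hx hx0
      have hvx := Scomp k α β t ℓ x (ℓ α + t β / x * (ℓ β - ℓ α)) hαI hβI hne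
        (hlo' x hx) (hhi' x hx)
      have hxt : |t β - t β| < δ := by simpa using hδ0
      have hvt := Scomp k α β t ℓ (t β) (ℓ α + t β / t β * (ℓ β - ℓ α)) hαI hβI hne
        (hlo' (t β) hxt) (hhi' (t β) hxt)
      rw [hminm x hx0] at hvx
      rw [hminm (t β) htβ] at hvt
      simp only [hS]
      rw [hvx, hvt]
      have htβne : (t β) ≠ 0 := ne_of_gt htβ
      have hxne : x ≠ 0 := ne_of_gt hx0
      field_simp
      ring
  · -- α = β + 1
    have hβα : β < α := by omega
    have hℓαβ : ℓ α < ℓ β := hℓ β α hβ1 hβα hαk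
    set gap := (if 2 ≤ β then ℓ (β - 1) - ℓ β else 1 : ℝ) with hgapdef
    have hgap : 0 < gap := by
      rw [hgapdef]; split_ifs with h
      · linarith [hℓ (β - 1) β (by omega) (by omega) hβk]
      · norm_num
    set δ := min (t β / 2) (gap * t β / (2 * (|ℓ β - ℓ α| + 1))) with hδdef
    have hδ0 : 0 < δ := lt_min (by positivity) (by positivity)
    have hδt : δ ≤ t β / 2 := min_le_left _ _
    have hball := mball (t β) (ℓ α) (ℓ β) gap δ htβ hgap hδdef
    have hlo' : ∀ x : ℝ, |x - t β| < δ →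
        ∀ j ∈ ((Finset.Icc 1 k).erase α).erase β, j < min α β →
          (ℓ α + t β / x * (ℓ β - ℓ α)) ≤ ℓ j ∧ ℓ α ≤ ℓ j := by
      intro x hx j hj hjlt
      obtain ⟨hx1, hx2⟩ := hball x hx
      have hx0 : 0 < x := by linarith
      obtain ⟨hj1, hjk, hjα, hjβ⟩ := hmemIcc j hj
      have hjβ' : j < β := by omega
      have hβ2 : 2 ≤ β := by omega
      have hgapval : gap = ℓ (β - 1) - ℓ β := by rw [hgapdef, if_pos hβ2]
      have h7 : ℓ (β - 1) ≤ ℓ j := by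
        rcases eq_or_lt_of_le (show j ≤ β - 1 by omega) with h | h
        · rw [h]
        · exact (hℓ j (β - 1) hj1 h (by omega)).le
      have h9 := abs_lt.mp hx2
      have h5 : ℓ β < ℓ j := hℓ j β hj1 hjβ' hβk
      constructor
      · linarith [h9.2]
      · linarith
    have hhi' : ∀ x : ℝ, |x - t β| < δ →
        ∀ j ∈ ((Finset.Icc 1 k).erase α).erase β, ¬ j < min α β →
          ℓ j ≤ (ℓ α + t β / x * (ℓ β - ℓ α)) ∧ ℓ j ≤ ℓ α := by
      intro x hx j hj hjge
      obtain ⟨hx1, hx2⟩ := hball x hx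
      have hx0 : 0 < x := by linarith
      obtain ⟨hj1, hjk, hjα, hjβ⟩ := hmemIcc j hj
      have hjα' : α < j := by omega
      have h5 : ℓ j < ℓ α := hℓ α j hα1 hjα' hjk
      have h6 : 0 ≤ t β / x * (ℓ β - ℓ α) :=
        mul_nonneg (by positivity) (by linarith)
      constructor <;> linarith
    have hminm : ∀ x : ℝ, 0 < x →
        min (ℓ α) (ℓ α + t β / x * (ℓ β - ℓ α)) = ℓ α := by
      intro x hx0
      apply min_eq_left
      have h6 : 0 ≤ t β / x * (ℓ β - ℓ α) :=
        mul_nonneg (by positivity) (by linarith)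
      linarith
    refine key_lemma S (t β) δ (t β * (ℓ β - ℓ α) * ℓ α ^ 2)
      ((t β * (ℓ β - ℓ α)) ^ 2 * ((t β * (ℓ β - ℓ α))
        + 2 * (∑ j ∈ (((Finset.Icc 1 k).erase α).erase β).filter (· < min α β),
            t j * ℓ j)))
      htβ hδ0 hδt ?_ ?_ ?_
    · exact mul_nonneg (mul_nonneg htβ.le (by linarith)) (sq_nonneg _)
    · have hcpos : 0 < t β * (ℓ β - ℓ α) := mul_pos htβ (by linarith)
      have hc2 : 0 < (t β * (ℓ β - ℓ α)) ^ 2 := by positivity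
      exact mul_pos hc2 (by linarith [hP])
    · intro x hx hx0
      have hvx := Scomp k α β t ℓ x (ℓ α + t β / x * (ℓ β - ℓ α)) hαI hβI hne
        (hlo' x hx) (hhi' x hx)
      have hxt : |t β - t β| < δ := by simpa using hδ0
      have hvt := Scomp k α β t ℓ (t β) (ℓ α + t β / t β * (ℓ β - ℓ α)) hαI hβI hne
        (hlo' (t β) hxt) (hhi' (t β) hxt)
      rw [hminm x hx0] at hvx
      rw [hminm (t β) htβ] at hvt
      simp only [hS]
      rw [hvx, hvt]
      have htβne : (t β) ≠ 0 := ne_of_gt htβ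
      have hxne : x ≠ 0 := ne_of_gt hx0
      field_simp
      ring
end

section
/- Let 0 < c ≤ 1 and define φ(x) = (1/8)·(c³/x + 9c²x − cx³ − x⁵) for x > 0. Then for every x with 1−√(1−c) ≤ x ≤ √c, one has φ(x) ≤ max( φ(1−√(1−c)), φ(√c) ). -/
/-!
Away from `0`, `φ'(y) = (c - y²) / (8 y²) · (5 y⁴ + 8 c y² - c²)`. On `(0, √c]` the first factor
is nonnegative and the second is increasing, so `φ'` changes sign at most once, from `-` to `+`:
`φ` first decreases and then increases, hence it is maximal at an endpoint.
-/

/-- `φ(x) = (1/8)·(c³/x + 9c²x − cx³ − x⁵)`. -/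
noncomputable def phi (c x : ℝ) : ℝ :=
  1 / 8 * (c ^ 3 / x + 9 * c ^ 2 * x - c * x ^ 3 - x ^ 5)

open Set

theorem le_max_of_hasDerivAt_eq_mul_monotoneOn {f w g : ℝ → ℝ} {a b x : ℝ}
    (hf : ∀ y ∈ Icc a b, HasDerivAt f (w y * g y) y) (hw : ∀ y ∈ Icc a b, 0 ≤ w y)
    (hg : MonotoneOn g (Icc a b)) (hx : x ∈ Icc a b) :
    f x ≤ max (f a) (f b) := by
  have hcont {s t : ℝ} (hs : a ≤ s) (ht : t ≤ b) : ContinuousOn f (Icc s t) := fun y hy =>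
    (hf y ⟨hs.trans hy.1, hy.2.trans ht⟩).continuousAt.continuousWithinAt
  have hderiv {s t : ℝ} (hs : a ≤ s) (ht : t ≤ b) :
      ∀ y ∈ interior (Icc s t), HasDerivWithinAt f (w y * g y) (interior (Icc s t)) y := by
    intro y hy
    rw [interior_Icc] at hy
    exact (hf y ⟨hs.trans hy.1.le, hy.2.le.trans ht⟩).hasDerivWithinAt
  rcases le_or_gt (g x) 0 with hgx | hgx
  · have hanti : AntitoneOn f (Icc a x) := by
      refine antitoneOn_of_hasDerivWithinAt_nonpos (convex_Icc a x) (hcont le_rfl hx.2)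
        (hderiv le_rfl hx.2) fun y hy => ?_
      rw [interior_Icc] at hy
      have hy' : y ∈ Icc a b := ⟨hy.1.le, hy.2.le.trans hx.2⟩
      exact mul_nonpos_of_nonneg_of_nonpos (hw y hy')
        ((hg hy' hx hy.2.le).trans hgx)
    exact (hanti (left_mem_Icc.2 hx.1) (right_mem_Icc.2 hx.1) hx.1).trans (le_max_left _ _)
  · have hmono : MonotoneOn f (Icc x b) := by
      refine monotoneOn_of_hasDerivWithinAt_nonneg (convex_Icc x b) (hcont hx.1 le_rfl)
        (hderiv hx.1 le_rfl) fun y hy => ?_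
      rw [interior_Icc] at hy
      have hy' : y ∈ Icc a b := ⟨hx.1.trans hy.1.le, hy.2.le⟩
      exact mul_nonneg (hw y hy') (hgx.trans_le (hg hx hy' hy.1.le)).le
    exact (hmono (left_mem_Icc.2 hx.2) (right_mem_Icc.2 hx.2) hx.2).trans (le_max_right _ _)

theorem phi_hasDerivAt (c : ℝ) {y : ℝ} (hy : y ≠ 0) :
    HasDerivAt (phi c) ((c - y ^ 2) / (8 * y ^ 2) * (5 * y ^ 4 + 8 * c * y ^ 2 - c ^ 2)) y := by
  have h := (((((hasDerivAt_inv hy).const_mul (c ^ 3)).add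
    ((hasDerivAt_id y).const_mul (9 * c ^ 2))).sub ((hasDerivAt_pow 3 y).const_mul c)).sub
    (hasDerivAt_pow 5 y)).const_mul (1 / 8 : ℝ)
  refine (h.congr_deriv ?_).congr_of_eventuallyEq (Filter.Eventually.of_forall fun t => ?_)
  · field_simp
    ring
  · simp [phi, div_eq_mul_inv]

theorem monotoneOn_quartic {c : ℝ} (hc : 0 ≤ c) :
    MonotoneOn (fun y : ℝ => 5 * y ^ 4 + 8 * c * y ^ 2 - c ^ 2) (Ici 0) := by
  intro y hy z _ hyz
  have h2 := pow_le_pow_left₀ hy hyz 2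
  have h4 := pow_le_pow_left₀ hy hyz 4
  dsimp only
  nlinarith

theorem phi_max_at_endpoints_general (c : ℝ) (hc0 : 0 < c) (x : ℝ)
    (hx1 : 1 - Real.sqrt (1 - c) ≤ x) (hx2 : x ≤ Real.sqrt c) :
    phi c x ≤ max (phi c (1 - Real.sqrt (1 - c))) (phi c (Real.sqrt c)) := by
  have ha : 0 < 1 - Real.sqrt (1 - c) := by
    have : Real.sqrt (1 - c) < 1 := (Real.sqrt_lt' one_pos).2 (by linarith)
    linarith
  have hpos {y : ℝ} (hy : y ∈ Icc (1 - Real.sqrt (1 - c)) (Real.sqrt c)) : 0 < y :=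
    ha.trans_le hy.1
  refine le_max_of_hasDerivAt_eq_mul_monotoneOn (fun y hy => phi_hasDerivAt c (hpos hy).ne')
    (fun y hy => ?_) ((monotoneOn_quartic hc0.le).mono fun y hy => (hpos hy).le) ⟨hx1, hx2⟩
  have : y ^ 2 ≤ c := (Real.le_sqrt (hpos hy).le hc0.le).1 hy.2
  exact div_nonneg (by linarith) (by positivity)

theorem phi_max_at_endpoints (c : ℝ) (hc0 : 0 < c) (hc1 : c ≤ 1) (x : ℝ)
    (hx1 : 1 - Real.sqrt (1 - c) ≤ x) (hx2 : x ≤ Real.sqrt c) :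
    phi c x ≤ max (phi c (1 - Real.sqrt (1 - c))) (phi c (Real.sqrt c)) :=
  phi_max_at_endpoints_general c hc0 x hx1 hx2
end

section
/- Let 0 < s < 1. For x with 1−√(1−s) ≤ x ≤ √s, define t₁ = 1 − (s+x²)/(2x), t₂ = (s−x²)/(2x), t₃ = x, ℓ₁ = 1, ℓ₂ = 1−x, ℓ₃ = t₁, and f(x) = t₁²ℓ₁³ + t₂²ℓ₂³ + t₃²ℓ₃³ + 2t₁t₂ℓ₁ℓ₂² + 2t₁t₃ℓ₁ℓ₃² + 2t₂t₃ℓ₂ℓ₃². Then for every x ∈ [1−√(1−s), √s], one has f(x) ≤ max( f(1−√(1−s)), f(√s) ). -/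
/-- The value of `S(A)` for the three-level symmetric 0–1 step function with
parameters `s` and `x`: here `t₁ = 1 − (s+x²)/(2x)`, `t₂ = (s−x²)/(2x)`, `t₃ = x`,
`ℓ₁ = 1`, `ℓ₂ = 1 − x`, `ℓ₃ = t₁`. -/
noncomputable def fThree (s x : ℝ) : ℝ :=
  let t₁ : ℝ := 1 - (s + x ^ 2) / (2 * x)
  let t₂ : ℝ := (s - x ^ 2) / (2 * x)
  let t₃ : ℝ := x
  let ℓ₁ : ℝ := 1
  let ℓ₂ : ℝ := 1 - x
  let ℓ₃ : ℝ := t₁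
  t₁ ^ 2 * ℓ₁ ^ 3 + t₂ ^ 2 * ℓ₂ ^ 3 + t₃ ^ 2 * ℓ₃ ^ 3 +
    2 * t₁ * t₂ * ℓ₁ * ℓ₂ ^ 2 + 2 * t₁ * t₃ * ℓ₁ * ℓ₃ ^ 2 + 2 * t₂ * t₃ * ℓ₂ * ℓ₃ ^ 2

noncomputable def Kq (u x : ℝ) : ℝ :=
  x^4 + (2*u-4)*x^3 + (6-8*u)*x^2 + (12*u-4*u^2-2*u^3)*x + 3*u^4 - 6*u^2

lemma ident (u y : ℝ) (hu : u ≠ 0) (hy : y ≠ 0) :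
    8*y*(fThree (u^2) u - fThree (u^2) y) = (u-y)^2 * Kq u y := by
  simp only [fThree, Kq]
  field_simp
  ring

lemma Kmono (u x y : ℝ) (h0 : 0 ≤ y) (h1 : y ≤ x) (h2 : x ≤ u) (h3 : u ≤ 1) :
    Kq u y ≤ Kq u x := by
  simp only [Kq]
  nlinarith [mul_nonneg (sub_nonneg.2 h1) (sub_nonneg.2 h2), mul_nonneg h0 (sub_nonneg.2 h1),
    mul_nonneg (sub_nonneg.2 h2) (sub_nonneg.2 h3), mul_nonneg h0 (sub_nonneg.2 h3),
    mul_nonneg (mul_nonneg (sub_nonneg.2 h1) (sub_nonneg.2 h2)) (sub_nonneg.2 h3),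
    mul_nonneg (mul_nonneg (sub_nonneg.2 h1) h0) (sub_nonneg.2 h3),
    mul_nonneg (mul_nonneg (sub_nonneg.2 h1) h0) (sub_nonneg.2 h2),
    mul_nonneg (mul_nonneg (sub_nonneg.2 h1) h0) h0,
    mul_nonneg (mul_nonneg (sub_nonneg.2 h1) (sub_nonneg.2 h2)) (sub_nonneg.2 h2),
    mul_nonneg (mul_nonneg (sub_nonneg.2 h1) (sub_nonneg.2 h1)) (sub_nonneg.2 h2),
    sq_nonneg (x-y), sq_nonneg (u-x), sq_nonneg (u-y), h0.trans h1]

theorem fThree_max_at_endpoints (s : ℝ) (hs0 : 0 < s) (hs1 : s < 1) (x : ℝ)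
    (hx1 : 1 - Real.sqrt (1 - s) ≤ x) (hx2 : x ≤ Real.sqrt s) :
    fThree s x ≤ max (fThree s (1 - Real.sqrt (1 - s))) (fThree s (Real.sqrt s)) := by
  set u : ℝ := Real.sqrt s with hud
  set a : ℝ := 1 - Real.sqrt (1 - s) with had
  have hu2 : u ^ 2 = s := Real.sq_sqrt hs0.le
  have hu0 : 0 < u := Real.sqrt_pos.2 hs0
  have hu1 : u ≤ 1 := by
    rw [hud]
    calc Real.sqrt s ≤ Real.sqrt 1 := Real.sqrt_le_sqrt hs1.le
    _ = 1 := Real.sqrt_one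
  have hv1 : Real.sqrt (1 - s) < 1 := by
    have := Real.sqrt_lt_sqrt (by linarith : (0:ℝ) ≤ 1 - s) (by linarith : 1 - s < 1)
    simpa using this
  have ha0 : 0 < a := by rw [had]; linarith
  have hx0 : 0 < x := lt_of_lt_of_le ha0 hx1
  have hax : a ≤ x := hx1
  have hxu : x ≤ u := hx2
  have hau : a ≤ u := hax.trans hxu
  have Ix := ident u x hu0.ne' hx0.ne'
  have Ia := ident u a hu0.ne' ha0.ne'
  rw [hu2] at Ix Ia
  rcases le_or_gt 0 (Kq u a) with hKa | hKa
  · -- f x ≤ f u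
    refine le_max_of_le_right ?_
    have hKx : 0 ≤ Kq u x := hKa.trans (Kmono u x a ha0.le hax hxu hu1)
    nlinarith [sq_nonneg (u - x), mul_nonneg (mul_nonneg (sq_nonneg (u-x)) hKx) hx0.le]
  · -- f x ≤ f a
    refine le_max_of_le_left ?_
    have hKxa : Kq u a ≤ Kq u x := Kmono u x a ha0.le hax hxu hu1
    have key : 8 * a * x * (fThree s a - fThree s x)
        = a * ((u - x) ^ 2 * Kq u x) - x * ((u - a) ^ 2 * Kq u a) := by
      linear_combination a * Ix - x * Ia
    have hsq : (u - x) ^ 2 ≤ (u - a) ^ 2 := by nlinarith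
    have rhs_nonneg : 0 ≤ a * ((u - x) ^ 2 * Kq u x) - x * ((u - a) ^ 2 * Kq u a) := by
      rcases le_or_gt 0 (Kq u x) with hKx | hKx
      · have h1 : 0 ≤ a * ((u - x) ^ 2 * Kq u x) :=
          mul_nonneg ha0.le (mul_nonneg (sq_nonneg _) hKx)
        have h2 : x * ((u - a) ^ 2 * Kq u a) ≤ 0 :=
          mul_nonpos_of_nonneg_of_nonpos hx0.le
            (mul_nonpos_of_nonneg_of_nonpos (sq_nonneg _) hKa.le)
        linarith
      · nlinarith [mul_nonneg (sub_nonneg.2 hax) (sq_nonneg (u-x)),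
          mul_nonneg (sub_nonneg.2 hsq) (mul_nonneg ha0.le (neg_nonneg.2 hKx.le)),
          mul_nonneg (mul_nonneg (sub_nonneg.2 hKxa) hx0.le) (sq_nonneg (u-a)),
          mul_nonneg (mul_nonneg (sub_nonneg.2 hax) (neg_nonneg.2 hKx.le)) (sq_nonneg (u-x))]
    nlinarith [mul_pos (mul_pos (by norm_num : (0:ℝ) < 8) ha0) hx0]
end

section
/- Let n and e be positive integers with e ≤ n(n−1)/2. Then there exists a simple graph G with n vertices and e edges such that the number of 4-edge paths in G is at most 8·e⁴/n³ (equivalently, at most (1/2)·c⁴·n⁵ where c = 2e/n²). -/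
/-!
A near-regular graph with `e` edges on `n` vertices exists: among all graphs with `e` edges take
one minimising `∑ v, deg v ^ 2`; if `deg u ≥ deg w + 2`, some neighbour `x` of `u` is not a
neighbour of `w`, and replacing the edge `ux` by `wx` lowers that sum. In a near-regular graph
every degree is at most `⌊2e/n⌋ + 1`. A directed path with four edges is a dart followed by three
steps, each to a neighbour of the current end other than the previous vertex, so there are at most
`2e (2e/n)³` of them, that is at most `e (2e/n)³ = 8e⁴/n³` undirected paths.
-/

/-- The number of 4-edge paths in `G` (subgraphs isomorphic to the path with 4 edges):
each such path corresponds to exactly two injective tuples (its two directions). -/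
noncomputable def pathCount4 {V : Type*} (G : SimpleGraph V) : ℕ :=
  Nat.card {f : Fin 5 → V //
    Function.Injective f ∧ ∀ i : Fin 4, G.Adj (f i.castSucc) (f i.succ)} / 2

open Finset SimpleGraph

lemma sum_sq_lt_of_move_unit {ι : Type*} [Fintype ι] [DecidableEq ι] {f g : ι → ℕ} {u w : ι}
    (huw : u ≠ w) (hu : g u + 1 = f u) (hw : g w = f w + 1)
    (hrest : ∀ v, v ≠ u → v ≠ w → g v = f v) (hlt : f w + 1 < f u) :
    ∑ v, g v ^ 2 < ∑ v, f v ^ 2 := by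
  have hw' : w ∈ univ.erase u := mem_erase.2 ⟨huw.symm, mem_univ w⟩
  rw [← add_sum_erase _ _ (mem_univ u), ← add_sum_erase _ _ hw',
    ← add_sum_erase _ _ (mem_univ u), ← add_sum_erase _ _ hw',
    sum_congr rfl fun v hv ↦ by
      rw [hrest v (ne_of_mem_erase (mem_of_mem_erase hv)) (ne_of_mem_erase hv)]]
  nlinarith

namespace SimpleGraph

variable {V : Type*}

def IsNearRegular (G : SimpleGraph V) [G.LocallyFinite] : Prop :=
  ∀ v w, G.degree v ≤ G.degree w + 1

variable [Fintype V]

lemma IsNearRegular.degree_sub_one_mul_card_le {G : SimpleGraph V} [DecidableRel G.Adj]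
    (hG : G.IsNearRegular) (v : V) :
    (G.degree v - 1) * Fintype.card V ≤ 2 * #G.edgeFinset := by
  rw [← sum_degrees_eq_twice_card_edges, mul_comm, ← smul_eq_mul, ← card_univ]
  exact card_nsmul_le_sum _ _ _ fun w _ ↦ Nat.sub_le_of_le_add (hG v w)

variable [DecidableEq V]

def pathTuples (G : SimpleGraph V) [DecidableRel G.Adj] (ℓ : ℕ) : Finset (Fin (ℓ + 1) → V) :=
  {f | Function.Injective f ∧ ∀ i : Fin ℓ, G.Adj (f i.castSucc) (f i.succ)}

section PathTuples

variable {G : SimpleGraph V} [DecidableRel G.Adj]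

lemma mem_pathTuples {ℓ : ℕ} {f : Fin (ℓ + 1) → V} :
    f ∈ G.pathTuples ℓ ↔ Function.Injective f ∧ ∀ i : Fin ℓ, G.Adj (f i.castSucc) (f i.succ) := by
  simp [pathTuples]

lemma card_pathTuples_one_le : #(G.pathTuples 1) ≤ 2 * #G.edgeFinset := by
  rw [← dart_card_eq_twice_card_edges, ← card_univ]
  refine card_le_card_of_surjOn (fun d : G.Dart ↦ ![d.fst, d.snd]) fun f hf ↦ ?_
  rw [mem_coe, mem_pathTuples] at hf
  refine ⟨⟨(f 0, f 1), hf.2 0⟩, mem_coe.2 (mem_univ _), ?_⟩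
  ext i
  fin_cases i <;> rfl

lemma card_pathTuples_succ_succ_le {Δ : ℕ} (hΔ : ∀ v, G.degree v ≤ Δ) (ℓ : ℕ) :
    #(G.pathTuples (ℓ + 2)) ≤ (Δ - 1) * #(G.pathTuples (ℓ + 1)) := by
  refine card_le_mul_card_image_of_maps_to (f := Fin.init) (fun f hf ↦ ?_) _ fun g hg ↦ ?_
  · rw [mem_pathTuples] at hf ⊢
    exact ⟨hf.1.comp (Fin.castSucc_injective _), fun i ↦ by
      simpa [Fin.init, ← Fin.succ_castSucc] using hf.2 i.castSucc⟩
  · rw [mem_pathTuples] at hg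
    have hprev : g (Fin.last ℓ).castSucc ∈ G.neighborFinset (g (Fin.last (ℓ + 1))) := by
      simpa [adj_comm] using hg.2 (Fin.last ℓ)
    calc #{f ∈ G.pathTuples (ℓ + 2) | Fin.init f = g}
        ≤ #((G.neighborFinset (g (Fin.last (ℓ + 1)))).erase (g (Fin.last ℓ).castSucc)) := by
          refine card_le_card_of_injOn (fun f ↦ f (Fin.last _)) (fun f hf ↦ ?_) ?_
          · rw [mem_coe, mem_filter, mem_pathTuples] at hf
            obtain ⟨⟨hinj, hadj⟩, rfl⟩ := hf
            refine mem_erase.2 ⟨fun h ↦ ?_, (mem_neighborFinset _ _ _).2 ?_⟩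
            · exact absurd (hinj h) (by simp [Fin.ext_iff])
            · simpa [Fin.init] using hadj (Fin.last _)
          · intro f hf f' hf' hff'
            simp only [coe_filter] at hf hf'
            rw [← Fin.snoc_init_self f, ← Fin.snoc_init_self f', hf.2, hf'.2]
            simp_all
      _ ≤ Δ - 1 := by
          rw [card_erase_of_mem hprev, card_neighborFinset_eq_degree]
          exact Nat.sub_le_sub_right (hΔ _) 1

lemma card_pathTuples_le {Δ : ℕ} (hΔ : ∀ v, G.degree v ≤ Δ) (ℓ : ℕ) :
    #(G.pathTuples (ℓ + 1)) ≤ 2 * #G.edgeFinset * (Δ - 1) ^ ℓ := by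
  induction ℓ with
  | zero => simpa using card_pathTuples_one_le
  | succ ℓ ih =>
    calc #(G.pathTuples (ℓ + 2)) ≤ (Δ - 1) * #(G.pathTuples (ℓ + 1)) :=
          card_pathTuples_succ_succ_le hΔ ℓ
      _ ≤ (Δ - 1) * (2 * #G.edgeFinset * (Δ - 1) ^ ℓ) := Nat.mul_le_mul_left _ ih
      _ = 2 * #G.edgeFinset * (Δ - 1) ^ (ℓ + 1) := by ring

end PathTuples

lemma exists_card_edgeSet_eq {e : ℕ} (he : e ≤ (Fintype.card V).choose 2) :
    ∃ G : SimpleGraph V, Nat.card G.edgeSet = e := by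
  classical
  rw [← card_edgeFinset_top_eq_card_choose_two] at he
  obtain ⟨s, hs, rfl⟩ := exists_subset_card_eq he
  refine ⟨fromEdgeSet s, ?_⟩
  rw [Nat.card_eq_fintype_card, ← edgeFinset_card]
  congr 1
  ext a
  simp only [mem_edgeFinset, edgeSet_fromEdgeSet]
  exact ⟨And.left, fun h ↦ ⟨h, by simpa using hs h⟩⟩

lemma degree_add_eq_of_edgeFinset_eq {G H : SimpleGraph V} [DecidableRel G.Adj]
    [DecidableRel H.Adj] {e₁ e₂ : Sym2 V} (h₁ : e₁ ∈ G.edgeFinset) (h₂ : e₂ ∉ G.edgeFinset)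
    (hH : H.edgeFinset = insert e₂ (G.edgeFinset.erase e₁)) (v : V) :
    H.degree v + (if v ∈ e₁ then 1 else 0) = G.degree v + (if v ∈ e₂ then 1 else 0) := by
  simp only [← card_incidenceFinset_eq_degree, incidenceFinset_eq_filter, hH, filter_insert,
    filter_erase]
  have h₂' : e₂ ∉ {e ∈ G.edgeFinset | v ∈ e} := fun h ↦ h₂ (mem_filter.1 h).1
  have hinsert : ∀ s ⊆ {e ∈ G.edgeFinset | v ∈ e}, #(insert e₂ s) = #s + 1 :=
    fun s hs ↦ card_insert_of_notMem fun h ↦ h₂' (hs h)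
  split_ifs with hv₂ hv₁ hv₁
  · rw [hinsert _ (erase_subset _ _), card_erase_add_one (mem_filter.2 ⟨h₁, hv₁⟩)]
  · rw [erase_eq_of_notMem (by simp [hv₁]), hinsert _ subset_rfl]
  · rw [card_erase_add_one (mem_filter.2 ⟨h₁, hv₁⟩), add_zero]
  · rw [erase_eq_of_notMem (by simp [hv₁])]

lemma exists_adj_not_adj_of_degree_add_one_lt {G : SimpleGraph V} [DecidableRel G.Adj]
    {u w : V} (h : G.degree w + 1 < G.degree u) : ∃ x, G.Adj u x ∧ x ≠ w ∧ ¬G.Adj w x := by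
  obtain ⟨x, hxu, hxw⟩ := exists_mem_notMem_of_card_lt_card
    (s := insert w (G.neighborFinset w)) (t := G.neighborFinset u)
    ((card_insert_le _ _).trans_lt (by simpa using h))
  simp only [mem_insert, mem_neighborFinset, not_or] at hxu hxw
  exact ⟨x, hxu, hxw⟩

lemma sum_degree_sq_lt_of_move_edge {G H : SimpleGraph V} [DecidableRel G.Adj]
    [DecidableRel H.Adj] {u w x : V} (hux : G.Adj u x) (hxw : x ≠ w) (hwx : ¬G.Adj w x)
    (hdeg : G.degree w + 1 < G.degree u) (hH : H = G.deleteEdges {s(u, x)} ⊔ edge w x) :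
    Nat.card H.edgeSet = Nat.card G.edgeSet ∧ ∑ v, H.degree v ^ 2 < ∑ v, G.degree v ^ 2 := by
  have huw : u ≠ w := by rintro rfl; omega
  have h₁ : s(u, x) ∈ G.edgeFinset := by simpa using hux
  have h₂ : s(w, x) ∉ G.edgeFinset := by simpa using hwx
  have hE : H.edgeFinset = insert s(w, x) (G.edgeFinset.erase s(u, x)) := by
    subst hH
    ext a
    by_cases ha : a = s(w, x) <;> simp [ha, hxw.symm, and_comm]
  have hdeg' := degree_add_eq_of_edgeFinset_eq h₁ h₂ hE
  refine ⟨?_, sum_sq_lt_of_move_unit huw ?_ ?_ (fun v hvu hvw ↦ ?_) hdeg⟩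
  · rw [Nat.card_eq_fintype_card, Nat.card_eq_fintype_card, ← edgeFinset_card,
      ← edgeFinset_card, hE, card_insert_of_notMem fun h ↦ h₂ (mem_of_mem_erase h),
      card_erase_add_one h₁]
  · simpa [huw, hux.ne] using hdeg' u
  · simpa [huw.symm, hxw.symm] using hdeg' w
  · simpa [hvu, hvw] using hdeg' v

theorem exists_isNearRegular_card_edgeSet_eq {e : ℕ} (he : e ≤ (Fintype.card V).choose 2) :
    ∃ G : SimpleGraph V, ∃ _ : DecidableRel G.Adj, Nat.card G.edgeSet = e ∧ G.IsNearRegular := by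
  classical
  obtain ⟨G, hGe, hGmin⟩ := Set.exists_min_image {G : SimpleGraph V | Nat.card G.edgeSet = e}
    (fun G ↦ ∑ v, G.degree v ^ 2) (Set.toFinite _) (exists_card_edgeSet_eq he)
  refine ⟨G, inferInstance, hGe, fun u w ↦ ?_⟩
  by_contra! h
  obtain ⟨x, hux, hxw, hwx⟩ := exists_adj_not_adj_of_degree_add_one_lt h
  obtain ⟨hcard, hlt⟩ := sum_degree_sq_lt_of_move_edge hux hxw hwx h rfl
  -- `convert` reconciles the two `DecidableRel` instances on the new graph
  exact absurd (hGmin _ (hcard.trans hGe)) (Nat.not_le.2 (by convert hlt))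

end SimpleGraph

lemma pathCount4_eq {V : Type*} [Fintype V] [DecidableEq V] (G : SimpleGraph V)
    [DecidableRel G.Adj] : pathCount4 G = #(G.pathTuples 4) / 2 := by
  rw [pathCount4, Nat.card_eq_fintype_card, Fintype.card_subtype]
  rfl

theorem exists_graph_few_paths_general (n e : ℕ)
    (hle : 2 * e ≤ n * (n - 1)) :
    ∃ G : SimpleGraph (Fin n), Nat.card G.edgeSet = e ∧
      (pathCount4 G : ℝ) ≤ 8 * (e : ℝ) ^ 4 / (n : ℝ) ^ 3 := by
  classical
  obtain ⟨G, _, hGe, hG⟩ := exists_isNearRegular_card_edgeSet_eq (V := Fin n) (e := e)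
    (by rwa [Fintype.card_fin, Nat.choose_two_right, Nat.le_div_iff_mul_le two_pos, mul_comm])
  refine ⟨G, hGe, ?_⟩
  rw [Nat.card_eq_fintype_card, ← edgeFinset_card] at hGe
  have hdeg : ∀ v, G.degree v ≤ 2 * e / n + 1 := fun v ↦ by
    have h := hG.degree_sub_one_mul_card_le v
    rw [Fintype.card_fin, hGe] at h
    have := (Nat.le_div_iff_mul_le v.pos).2 h
    omega
  have hpaths : pathCount4 G ≤ e * (2 * e / n) ^ 3 := by
    have h := card_pathTuples_le hdeg 3
    rw [hGe, Nat.add_sub_cancel, mul_assoc] at h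
    rw [pathCount4_eq]
    exact Nat.div_le_of_le_mul h
  calc (pathCount4 G : ℝ) ≤ e * ((2 * e / n : ℕ) : ℝ) ^ 3 := by exact_mod_cast hpaths
    _ ≤ e * (2 * e / n) ^ 3 := by
        gcongr
        exact Nat.cast_div_le.trans_eq (by push_cast; rfl)
    _ = 8 * e ^ 4 / n ^ 3 := by ring

theorem exists_graph_few_paths (n e : ℕ) (hn : 0 < n) (he : 0 < e)
    (hle : 2 * e ≤ n * (n - 1)) :
    ∃ G : SimpleGraph (Fin n), Nat.card G.edgeSet = e ∧
      (pathCount4 G : ℝ) ≤ 8 * (e : ℝ) ^ 4 / (n : ℝ) ^ 3 :=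
  exists_graph_few_paths_general n e hle
end

section
/- Let n and e be positive integers with 13 ≤ e ≤ n(n−1)/2. Then there exists a simple graph G with n vertices and e edges such that the number of 4-edge paths in G is at least (1/2)·(√(2e) − 5)⁵. -/
/-!
Write `e = C(a,2) + b` with `0 < b ≤ a` (rather than `0 ≤ b < a`): since `b > 0`, the bound
`e ≤ C(n,2)` forces `a < n`, so the extra vertex of the quasi-clique exists. Its `a`-clique alone
carries `a(a-1)(a-2)(a-3)(a-4) ≥ (a - 4)^5` injective 4-edge walks, two per path. Finally
`2e ≤ a(a-1) + 2a < (a+1)^2` gives `√(2e) - 5 ≤ a - 4`, and `x ↦ x^5` is monotone on `ℝ`.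
-/

theorem Nat.exists_eq_choose_two_add {e : ℕ} (he : 0 < e) :
    ∃ a b, 0 < b ∧ b ≤ a ∧ e = a.choose 2 + b := by
  induction e, he using Nat.le_induction with
  | base => exact ⟨1, 1, one_pos, le_rfl, rfl⟩
  | succ e _ ih =>
    obtain ⟨a, b, -, hba, rfl⟩ := ih
    rcases hba.lt_or_eq with hba | rfl
    · exact ⟨a, b + 1, b.succ_pos, hba, rfl⟩
    · refine ⟨b + 1, 1, one_pos, by omega, ?_⟩
      rw [Nat.choose_succ_succ, Nat.choose_one_right]
      ring

theorem Odd.pow_add_one_sub_le_descFactorial {k : ℕ} (hk : Odd k) (a : ℕ) :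
    ((a : ℝ) + 1 - k) ^ k ≤ a.descFactorial k := by
  rcases lt_or_ge (a + 1) k with hak | hka
  · have hneg : (a : ℝ) + 1 - k < 0 := by
      rw [sub_neg]; exact_mod_cast hak
    exact (hk.pow_neg hneg).le.trans (Nat.cast_nonneg _)
  · simpa [Nat.cast_sub hka] using (Nat.cast_le (α := ℝ)).2 (Nat.pow_sub_le_descFactorial a k)

namespace SimpleGraph

open Finset

theorem IsNClique.descFactorial_le_card_paths {V : Type*} [Finite V] {G : SimpleGraph V}
    {s : Finset V} {a : ℕ} (hs : G.IsNClique a s) (k : ℕ) :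
    a.descFactorial (k + 1) ≤ Nat.card {f : Fin (k + 1) → V //
      Function.Injective f ∧ ∀ i : Fin k, G.Adj (f i.castSucc) (f i.succ)} := by
  have hcard : Nat.card (Fin (k + 1) ↪ s) = a.descFactorial (k + 1) := by
    rw [Nat.card_eq_fintype_card, Fintype.card_embedding_eq, Fintype.card_fin,
      Fintype.card_coe, hs.card_eq]
  rw [← hcard]
  refine Nat.card_le_card_of_injective
    (fun g => ⟨Subtype.val ∘ g, Subtype.val_injective.comp g.injective, fun i => ?_⟩) ?_
  · exact hs.isClique (g _).2 (g _).2
      fun h => Fin.castSucc_lt_succ.ne (g.injective (Subtype.val_injective h))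
  · intro g₁ g₂ h
    ext i : 1
    exact Subtype.val_injective (congrFun (congrArg Subtype.val h) i)

theorem IsNClique.descFactorial_le_two_mul_pathCount4 {V : Type*} [Finite V] {G : SimpleGraph V}
    {s : Finset V} {a : ℕ} (hs : G.IsNClique a s) :
    a.descFactorial 5 ≤ 2 * pathCount4 G := by
  have two_dvd : 2 ∣ a.descFactorial 5 :=
    (Nat.dvd_factorial two_pos (by norm_num)).trans (Nat.factorial_dvd_descFactorial a 5)
  rw [← Nat.mul_div_cancel' two_dvd]
  exact Nat.mul_le_mul_left 2 (Nat.div_le_div_right (hs.descFactorial_le_card_paths 4))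

theorem card_edgeSet_sup_edge {V : Type*} [Finite V] {G : SimpleGraph V} {s t : V}
    (hn : ¬G.Adj s t) (h : s ≠ t) :
    Nat.card (G ⊔ edge s t).edgeSet = Nat.card G.edgeSet + 1 := by
  simp only [Nat.card_coe_set_eq, edgeSet_sup, edgeSet_edge_of_ne h, Set.union_singleton]
  exact Set.ncard_insert_of_notMem hn

section QuasiClique

def quasiClique (n a b : ℕ) : SimpleGraph (Fin n) :=
  fromRel fun x y => x.val < y.val ∧ (y.val < a ∨ y.val = a ∧ x.val < b)

variable {n a b : ℕ}

theorem quasiClique_zero_left : quasiClique n 0 b = ⊥ := by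
  ext x y
  simp only [quasiClique, fromRel_adj, bot_adj, iff_false, ne_eq, Fin.ext_iff]
  omega

theorem quasiClique_succ_zero : quasiClique n (a + 1) 0 = quasiClique n a a := by
  ext x y
  simp only [quasiClique, fromRel_adj, ne_eq, Fin.ext_iff]
  omega

theorem quasiClique_succ_right (hba : b < a) (han : a < n) :
    quasiClique n a (b + 1) = quasiClique n a b ⊔ edge ⟨b, hba.trans han⟩ ⟨a, han⟩ := by
  ext x y
  simp only [quasiClique, sup_adj, fromRel_adj, edge_adj, ne_eq, Fin.ext_iff]
  omega

theorem not_adj_quasiClique (hba : b < a) (han : a < n) :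
    ¬(quasiClique n a b).Adj ⟨b, hba.trans han⟩ ⟨a, han⟩ := by
  simp only [quasiClique, fromRel_adj, ne_eq, Fin.ext_iff]
  omega

theorem card_edgeSet_quasiClique (hba : b ≤ a) (han : a < n) :
    Nat.card (quasiClique n a b).edgeSet = a.choose 2 + b := by
  induction a generalizing b with
  | zero => simp [Nat.le_zero.1 hba, quasiClique_zero_left]
  | succ a iha =>
    induction b with
    | zero =>
      rw [quasiClique_succ_zero, iha le_rfl (by omega), Nat.choose_succ_succ, Nat.choose_one_right]
      ring
    | succ b ihb =>
      rw [quasiClique_succ_right hba han, card_edgeSet_sup_edge (not_adj_quasiClique hba han)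
        (by simp [Fin.ext_iff]; omega), ihb (by omega)]
      ring

theorem isNClique_quasiClique (han : a ≤ n) :
    (quasiClique n a b).IsNClique a (univ.map (Fin.castLEEmb han)) := by
  refine ⟨?_, by simp⟩
  intro x hx y hy hxy
  simp only [coe_map, Set.mem_image, mem_coe, mem_univ, true_and] at hx hy
  obtain ⟨x, rfl⟩ := hx
  obtain ⟨y, rfl⟩ := hy
  have hxy' : (x : ℕ) ≠ y := fun h => hxy (by simp [Fin.ext_iff, h])
  simp only [quasiClique, fromRel_adj, Fin.castLEEmb_apply, Fin.val_castLE]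
  exact ⟨hxy, by omega⟩

end QuasiClique

end SimpleGraph

theorem Real.sqrt_two_mul_choose_two_add_le {a b : ℕ} (hba : b ≤ a) :
    √(2 * ((a.choose 2 + b : ℕ) : ℝ)) ≤ a + 1 := by
  have hba' : (b : ℝ) ≤ a := by exact_mod_cast hba
  rw [Real.sqrt_le_iff]
  refine ⟨by positivity, ?_⟩
  push_cast [Nat.cast_choose_two]
  nlinarith

theorem exists_graph_many_paths_general (n e : ℕ) (he : 13 ≤ e)
    (hle : 2 * e ≤ n * (n - 1)) :
    ∃ G : SimpleGraph (Fin n), Nat.card G.edgeSet = e ∧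
      1 / 2 * (Real.sqrt (2 * (e : ℝ)) - 5) ^ 5 ≤ (pathCount4 G : ℝ) := by
  obtain ⟨a, b, hb, hba, rfl⟩ := Nat.exists_eq_choose_two_add (by omega : 0 < e)
  have han : a < n := by
    by_contra! hna
    have hchoose := Nat.choose_le_choose 2 hna
    have he_le : a.choose 2 + b ≤ n.choose 2 := by
      rw [Nat.choose_two_right n, Nat.le_div_iff_mul_le two_pos]
      omega
    omega
  refine ⟨.quasiClique n a b, SimpleGraph.card_edgeSet_quasiClique hba han, ?_⟩
  have hpaths : (a.descFactorial 5 : ℝ) ≤ 2 * pathCount4 (SimpleGraph.quasiClique n a b) := by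
    exact_mod_cast (SimpleGraph.isNClique_quasiClique han.le).descFactorial_le_two_mul_pathCount4
  have hbase : √(2 * ((a.choose 2 + b : ℕ) : ℝ)) - 5 ≤ a + 1 - 5 := by
    linarith [Real.sqrt_two_mul_choose_two_add_le hba]
  have hpow := ((Odd.pow_le_pow (by decide : Odd 5)).2 hbase).trans
    (Odd.pow_add_one_sub_le_descFactorial (by decide) a)
  linarith

theorem exists_graph_many_paths (n e : ℕ) (hn : 0 < n) (he : 13 ≤ e)
    (hle : 2 * e ≤ n * (n - 1)) :
    ∃ G : SimpleGraph (Fin n), Nat.card G.edgeSet = e ∧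
      1 / 2 * (Real.sqrt (2 * (e : ℝ)) - 5) ^ 5 ≤ (pathCount4 G : ℝ) :=
  exists_graph_many_paths_general n e he hle
end
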